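/- arXiv:1704.05014 — 5 statements merged into one kernel-verified Lean document; each statement's English description precedes it below -/
import Mathlib

section
/- For all M, σ, T > 0 and real ρ, μ with ρ > μ: (M/2)(1 + erf((σ² + 2ρ - 2μ)√T/(2√2 σ))) e^{ρT} + (M/2)(1 - erf((σ² + 2ρ - 2μ)√T/(2√2 σ))) e^{μT} < M e^{ρT}. -/
open MeasureTheory ProbabilityTheory Real

noncomputable def erf (x : ℝ) : ℝ := (2 / Real.sqrt π) * ∫ t in (0:ℝ)..x, Real.exp (-t ^ 2)

lemma gauss_int : ∀ x : ℝ, (∫ t in Set.Ioi x, Real.exp (-t ^ 2)) > 0 := by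
  intro x
  have hint : Integrable (fun t : ℝ => Real.exp (-t ^ 2)) := by
    simpa using integrable_exp_neg_mul_sq (one_pos)
  refine (setIntegral_pos_iff_support_of_nonneg_ae ?_ hint.integrableOn).2 ?_
  · filter_upwards with t using (Real.exp_pos _).le
  · have : (Function.support fun t : ℝ => Real.exp (-t ^ 2)) = Set.univ := by
      ext t; simp [Function.support, (Real.exp_pos _).ne']
    rw [this]
    simpa using measure_Ioi_pos (μ := volume) x

lemma erf_lt_one (x : ℝ) : erf x < 1 := by
  have hπ : 0 < Real.sqrt π := Real.sqrt_pos.2 Real.pi_pos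
  have hint : Integrable (fun t : ℝ => Real.exp (-t ^ 2)) := by
    simpa using integrable_exp_neg_mul_sq (one_pos)
  have key : (∫ t in (0:ℝ)..x, Real.exp (-t ^ 2)) < Real.sqrt π / 2 := by
    rcases le_or_gt x 0 with hx | hx
    · have h1 : (∫ t in (0:ℝ)..x, Real.exp (-t ^ 2)) ≤ 0 := by
        rw [intervalIntegral.integral_symm]
        simp only [neg_nonpos]
        apply intervalIntegral.integral_nonneg hx
        intro t _; exact (Real.exp_pos _).le
      have : (0:ℝ) < Real.sqrt π / 2 := by positivity
      linarith
    · have hIoi : (∫ t in Set.Ioi (0:ℝ), Real.exp (-t ^ 2)) = Real.sqrt π / 2 := by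
        have := integral_gaussian_Ioi 1
        simpa using this
      have hsplit : (∫ t in Set.Ioi (0:ℝ), Real.exp (-t ^ 2)) =
          (∫ t in Set.Ioc (0:ℝ) x, Real.exp (-t ^ 2)) +
          (∫ t in Set.Ioi x, Real.exp (-t ^ 2)) := by
        rw [← setIntegral_union (Set.Ioc_disjoint_Ioi le_rfl) measurableSet_Ioi
          hint.integrableOn hint.integrableOn, Set.Ioc_union_Ioi_eq_Ioi hx.le]
      rw [intervalIntegral.integral_of_le hx.le]
      have := gauss_int x
      linarith [hsplit ▸ hIoi]
  have : erf x = (2 / Real.sqrt π) * ∫ t in (0:ℝ)..x, Real.exp (-t ^ 2) := rfl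
  rw [this]
  calc (2 / Real.sqrt π) * ∫ t in (0:ℝ)..x, Real.exp (-t ^ 2)
      < (2 / Real.sqrt π) * (Real.sqrt π / 2) := by
        apply mul_lt_mul_of_pos_left key (by positivity)
    _ = 1 := by field_simp

theorem skorokhod_lt_honest_riskless (M σ T ρ μ : ℝ) (hM : 0 < M) (hσ : 0 < σ) (hT : 0 < T)
    (hρμ : ρ > μ) :
    (M / 2) * (1 + erf ((σ ^ 2 + 2 * ρ - 2 * μ) * Real.sqrt T / (2 * Real.sqrt 2 * σ)))
        * Real.exp (ρ * T)
      + (M / 2) * (1 - erf ((σ ^ 2 + 2 * ρ - 2 * μ) * Real.sqrt T / (2 * Real.sqrt 2 * σ)))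
        * Real.exp (μ * T)
      < M * Real.exp (ρ * T) := by
  set e := erf ((σ ^ 2 + 2 * ρ - 2 * μ) * Real.sqrt T / (2 * Real.sqrt 2 * σ)) with he
  have h1 : e < 1 := erf_lt_one _
  have h2 : Real.exp (μ * T) < Real.exp (ρ * T) :=
    Real.exp_lt_exp.2 (by nlinarith)
  nlinarith [mul_pos (mul_pos hM (by linarith : (0:ℝ) < 1 - e))
    (by linarith : (0:ℝ) < Real.exp (ρ * T) - Real.exp (μ * T))]
end

section
/- Let B_T ~ N(0,T) with T > 0, σ > 0, and let a = (ρ - μ + σ²/2)T/σ with ρ, μ ∈ ℝ and μ > ρ. Then M·Pr{B_T ≤ a}·e^{ρT} + M·E[𝟙{B_T > a}·exp((μ - σ²/2)T + σ B_T)] > M·e^{μT} for any M > 0. -/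
/-!
Write `g x = exp ((μ - σ²/2) T + σ x)`. The threshold `a` is exactly where `g` crosses `e^{ρT}`,
so the insider's payoff is `max (g, e^{ρT})`. Its expectation strictly exceeds
`E[g] = e^{μT}` (the Gaussian moment generating function), because `g < e^{ρT}` on `(-∞, a)`,
a set of positive Gaussian measure.
-/

open MeasureTheory ProbabilityTheory Real

theorem setIntegral_lt_measureReal_mul {α : Type*} [MeasurableSpace α] {ν : Measure α}
    [IsFiniteMeasure ν] {f : α → ℝ} {s : Set α} {c : ℝ} (hs : MeasurableSet s)
    (hf : IntegrableOn f s ν) (hle : ∀ x ∈ s, f x ≤ c) (hlt : ν {x ∈ s | f x < c} ≠ 0) :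
    ∫ x in s, f x ∂ν < ν.real s * c := by
  have hdiff_int : IntegrableOn (fun x ↦ c - f x) s ν := (integrable_const c).sub hf
  have hdiff_nonneg : 0 ≤ᵐ[ν.restrict s] fun x ↦ c - f x := by
    filter_upwards [ae_restrict_mem hs] with x hx
    exact sub_nonneg.2 (hle x hx)
  have hpos : 0 < ∫ x in s, (c - f x) ∂ν := by
    rw [setIntegral_pos_iff_support_of_nonneg_ae hdiff_nonneg hdiff_int]
    refine (pos_iff_ne_zero.2 hlt).trans_le (measure_mono fun x ⟨hxs, hx⟩ ↦ ⟨?_, hxs⟩)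
    exact sub_ne_zero.2 hx.ne'
  rw [integral_sub (integrable_const c) hf, setIntegral_const, smul_eq_mul] at hpos
  linarith

theorem integral_lt_measureReal_mul_add_setIntegral_compl {α : Type*} [MeasurableSpace α]
    {ν : Measure α} [IsFiniteMeasure ν] {f : α → ℝ} {s : Set α} {c : ℝ} (hs : MeasurableSet s)
    (hf : Integrable f ν) (hle : ∀ x ∈ s, f x ≤ c) (hlt : ν {x ∈ s | f x < c} ≠ 0) :
    ∫ x, f x ∂ν < ν.real s * c + ∫ x in sᶜ, f x ∂ν := by
  rw [← integral_add_compl hs hf]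
  linarith [setIntegral_lt_measureReal_mul hs hf.integrableOn hle hlt]

theorem integral_exp_add_mul_gaussianReal (m : ℝ) (v : NNReal) (b t : ℝ) :
    ∫ x, rexp (b + t * x) ∂gaussianReal m v = rexp (b + m * t + v * t ^ 2 / 2) := by
  simp_rw [exp_add b]
  have hmgf := congrFun (mgf_fun_id_gaussianReal (μ := m) (v := v)) t
  rw [mgf] at hmgf
  rw [integral_const_mul, hmgf, ← exp_add, add_assoc]

theorem integrable_exp_add_mul_gaussianReal (m : ℝ) (v : NNReal) (b t : ℝ) :
    Integrable (fun x ↦ rexp (b + t * x)) (gaussianReal m v) := by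
  simp_rw [exp_add b]
  exact (integrable_exp_mul_gaussianReal t).const_mul _

theorem gaussianReal_ne_zero_of_volume_ne_zero {m : ℝ} {v : NNReal} (hv : v ≠ 0) {s : Set ℝ}
    (hs : volume s ≠ 0) : gaussianReal m v s ≠ 0 :=
  fun h ↦ hs (gaussianReal_absolutelyContinuous' m hv h)

theorem rv_insider_gt_honest_general (M T ρ μ σ : ℝ) (hM : 0 < M) (hT : 0 < T) (hσ : 0 < σ)
    (a : ℝ) (ha : a = (ρ - μ + σ ^ 2 / 2) * T / σ) :
    M * ((gaussianReal 0 T.toNNReal) {x | x ≤ a}).toReal * Real.exp (ρ * T)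
      + M * ∫ x in Set.Ioi a, Real.exp ((μ - σ ^ 2 / 2) * T + σ * x) ∂(gaussianReal 0 T.toNNReal)
      > M * Real.exp (μ * T) := by
  set ν := gaussianReal 0 T.toNNReal
  set g : ℝ → ℝ := fun x ↦ rexp ((μ - σ ^ 2 / 2) * T + σ * x)
  have hv : T.toNNReal ≠ 0 := by simpa using hT
  have hσa : σ * a = (ρ - μ + σ ^ 2 / 2) * T := by rw [ha]; field_simp
  have hg_le : ∀ x ≤ a, g x ≤ rexp (ρ * T) := fun x hx ↦
    exp_le_exp.2 (by linarith [mul_le_mul_of_nonneg_left hx hσ.le])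
  have hg_lt : ∀ x < a, g x < rexp (ρ * T) := fun x hx ↦
    exp_lt_exp.2 (by linarith [mul_lt_mul_of_pos_left hx hσ])
  have hmean : ∫ x, g x ∂ν = rexp (μ * T) := by
    rw [integral_exp_add_mul_gaussianReal, Real.coe_toNNReal _ hT.le]
    congr 1
    ring
  have hgap : ν {x ∈ Set.Iic a | g x < rexp (ρ * T)} ≠ 0 :=
    gaussianReal_ne_zero_of_volume_ne_zero hv <|
      ne_bot_of_le_ne_bot (by simp : volume (Set.Iio a) ≠ 0)
        (measure_mono fun x (hx : x < a) ↦ ⟨hx.le, hg_lt x hx⟩)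
  have hgain := integral_lt_measureReal_mul_add_setIntegral_compl measurableSet_Iic
    (integrable_exp_add_mul_gaussianReal 0 _ _ σ) hg_le hgap
  rw [hmean, Set.compl_Iic] at hgain
  have := mul_lt_mul_of_pos_left hgain hM
  rwa [mul_add, ← mul_assoc] at this

theorem rv_insider_gt_honest (M T ρ μ σ : ℝ) (hM : 0 < M) (hT : 0 < T) (hσ : 0 < σ)
    (hμρ : μ > ρ) (a : ℝ) (ha : a = (ρ - μ + σ ^ 2 / 2) * T / σ) :
    M * ((gaussianReal 0 T.toNNReal) {x | x ≤ a}).toReal * Real.exp (ρ * T)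
      + M * ∫ x in Set.Ioi a, Real.exp ((μ - σ ^ 2 / 2) * T + σ * x) ∂(gaussianReal 0 T.toNNReal)
      > M * Real.exp (μ * T) :=
  rv_insider_gt_honest_general M T ρ μ σ hM hT hσ a ha
end

section
/- Let B_T ~ N(0,T) with T > 0, σ > 0, a = (ρ - μ + σ²/2)T/σ, and ρ > μ. Then M·Pr{B_T ≤ a}·e^{ρT} + M·E[𝟙{B_T > a}·exp((μ - σ²/2)T + σ B_T)] > M·e^{ρT} for any M > 0. -/
/-!
On `{B_T > a}` the integrand exceeds `exp (ρ T)`, because `σ a + (μ - σ²/2) T = ρ T`. The left-hand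
side is therefore `M` times a mixture of `exp (ρ T)` (weight `P(B_T ≤ a)`) and of something strictly
larger on an event of positive probability (weight `P(B_T > a)`), which beats `M exp (ρ T)`.
-/

open MeasureTheory ProbabilityTheory Real

namespace MeasureTheory

variable {X : Type*} [MeasurableSpace X] {μ : Measure X} {s : Set X} {f : X → ℝ} {c : ℝ}

lemma measureReal_mul_lt_setIntegral_of_lt [IsFiniteMeasure μ] (hs : MeasurableSet s)
    (hμs : μ s ≠ 0) (hf : IntegrableOn f s μ) (hfc : ∀ x ∈ s, c < f x) :
    μ.real s * c < ∫ x in s, f x ∂μ := by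
  have hgap : 0 < ∫ x in s, (f x - c) ∂μ := by
    rw [setIntegral_pos_iff_support_of_nonneg_ae]
    · refine hμs.bot_lt.trans_le (measure_mono fun x hx ↦ ⟨(sub_pos.2 (hfc x hx)).ne', hx⟩)
    · filter_upwards [ae_restrict_mem hs] with x hx using (sub_pos.2 (hfc x hx)).le
    · exact hf.sub (integrableOn_const (measure_ne_top μ s))
  rw [integral_sub hf (integrableOn_const (measure_ne_top μ s)), setIntegral_const,
    smul_eq_mul] at hgap
  linarith

lemma lt_measureReal_compl_mul_add_setIntegral [IsProbabilityMeasure μ] (hs : MeasurableSet s)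
    (hμs : μ s ≠ 0) (hf : IntegrableOn f s μ) (hfc : ∀ x ∈ s, c < f x) :
    c < μ.real sᶜ * c + ∫ x in s, f x ∂μ := by
  have hsplit : c = μ.real s * c + μ.real sᶜ * c := by
    rw [← add_mul, probReal_add_probReal_compl hs, one_mul]
  linarith [measureReal_mul_lt_setIntegral_of_lt hs hμs hf hfc]

end MeasureTheory

namespace ProbabilityTheory

lemma integrable_exp_const_add_mul_gaussianReal (m : ℝ) (v : NNReal) (c t : ℝ) :
    Integrable (fun x ↦ exp (c + t * x)) (gaussianReal m v) := by
  simpa only [exp_add] using (integrable_exp_mul_gaussianReal (μ := m) (v := v) t).const_mul (exp c)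

lemma gaussianReal_Ioi_ne_zero (m : ℝ) {v : NNReal} (hv : v ≠ 0) (a : ℝ) :
    gaussianReal m v (Set.Ioi a) ≠ 0 :=
  fun h ↦ by simpa using gaussianReal_absolutelyContinuous' m hv h

end ProbabilityTheory

theorem rv_insider_gt_honest_riskless_general (M T ρ μ σ : ℝ) (hM : 0 < M) (hT : 0 < T) (hσ : 0 < σ)
    (a : ℝ) (ha : a = (ρ - μ + σ ^ 2 / 2) * T / σ) :
    M * ((gaussianReal 0 T.toNNReal) {x | x ≤ a}).toReal * Real.exp (ρ * T)
      + M * ∫ x in Set.Ioi a, Real.exp ((μ - σ ^ 2 / 2) * T + σ * x) ∂(gaussianReal 0 T.toNNReal)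
      > M * Real.exp (ρ * T) := by
  have hσa : σ * a = (ρ - μ + σ ^ 2 / 2) * T := by
    rw [ha]
    field_simp
  have hexceeds : ∀ x ∈ Set.Ioi a, exp (ρ * T) < exp ((μ - σ ^ 2 / 2) * T + σ * x) := by
    intro x hx
    rw [exp_lt_exp]
    linarith [mul_lt_mul_of_pos_left (Set.mem_Ioi.1 hx) hσ]
  have hmix := lt_measureReal_compl_mul_add_setIntegral measurableSet_Ioi
    (gaussianReal_Ioi_ne_zero 0 (Real.toNNReal_pos.2 hT).ne' a)
    (integrable_exp_const_add_mul_gaussianReal 0 _ _ σ).integrableOn hexceeds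
  rw [Set.compl_Ioi] at hmix
  have hscaled := mul_lt_mul_of_pos_left hmix hM
  rw [mul_add, ← mul_assoc] at hscaled
  exact hscaled

theorem rv_insider_gt_honest_riskless (M T ρ μ σ : ℝ) (hM : 0 < M) (hT : 0 < T) (hσ : 0 < σ)
    (hρμ : ρ > μ) (a : ℝ) (ha : a = (ρ - μ + σ ^ 2 / 2) * T / σ) :
    M * ((gaussianReal 0 T.toNNReal) {x | x ≤ a}).toReal * Real.exp (ρ * T)
      + M * ∫ x in Set.Ioi a, Real.exp ((μ - σ ^ 2 / 2) * T + σ * x) ∂(gaussianReal 0 T.toNNReal)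
      > M * Real.exp (ρ * T) :=
  rv_insider_gt_honest_riskless_general M T ρ μ σ hM hT hσ a ha
end

section
/- Let X ~ N(0,T) with T > 0 and σ > 0, μ, ρ ∈ ℝ, a = (ρ - μ + σ²/2)T/σ. Then E[𝟙{X ≤ a} e^{ρT} + 𝟙{X > a} exp((μ - σ²/2)T + σX)] = (1/2)(1 + erf((σ²+2ρ-2μ)√T/(2√2σ)))e^{ρT} + (1/2)(1 + erf((σ²-2ρ+2μ)√T/(2√2σ)))e^{μT}. -/
/-!
On `{X ≤ a}` the payoff is the constant `e^{ρT}`, contributing `e^{ρT} P(X ≤ a)`.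
On `{X > a}` it is `e^{μT}` times `e^{σX - σ²T/2}`, which is the density of `N(σT, T)` with
respect to `N(0, T)` (exponential tilting of a Gaussian only shifts its mean), so it contributes
`e^{μT} P(Y > a)` with `Y ~ N(σT, T)`. Both probabilities are Gaussian distribution functions,
which are `erf` in disguise: `N(0, 1/2)` has density `e^{-x²}/√π`, so its distribution function
is `(1 + erf x) / 2`.
-/

open MeasureTheory ProbabilityTheory Real

open Set
open scoped NNReal

lemma erf_neg (x : ℝ) : erf (-x) = -erf x := by
  have h := intervalIntegral.integral_comp_neg (a := 0) (b := x) fun t ↦ exp (-t ^ 2)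
  simp only [neg_sq, neg_zero] at h
  rw [erf, erf, h, intervalIntegral.integral_symm 0 (-x)]
  ring

lemma integral_exp_neg_sq_Iic (x : ℝ) :
    ∫ t in Iic x, exp (-t ^ 2) = √π / 2 * (1 + erf x) := by
  have hint : Integrable fun t : ℝ ↦ exp (-t ^ 2) := by
    simpa using integrable_exp_neg_mul_sq one_pos
  have hhalf : ∫ t in Iic 0, exp (-t ^ 2) = √π / 2 := by
    have h := integral_gaussian_Ioi 1
    simp only [neg_mul, one_mul, div_one] at h
    rw [← h, ← neg_zero, ← integral_comp_neg_Ioi]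
    simp
  have hsplit := intervalIntegral.integral_Iic_sub_Iic hint.integrableOn hint.integrableOn
    (a := 0) (b := x)
  rw [erf, ← hsplit, hhalf]
  field_simp
  ring

lemma gaussianPDFReal_zero_half (x : ℝ) :
    gaussianPDFReal 0 2⁻¹ x = exp (-x ^ 2) / √π := by
  rw [gaussianPDFReal_def]
  push_cast
  field_simp
  ring_nf

lemma gaussianReal_real_eq_integral (m : ℝ) {v : ℝ≥0} (hv : v ≠ 0) (s : Set ℝ) :
    (gaussianReal m v).real s = ∫ x in s, gaussianPDFReal m v x := by
  rw [measureReal_def, gaussianReal_apply_eq_integral m hv,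
    ENNReal.toReal_ofReal (setIntegral_nonneg_of_ae (ae_of_all _ (gaussianPDFReal_nonneg m v)))]

lemma gaussianReal_zero_half_real_Iic (x : ℝ) :
    (gaussianReal 0 2⁻¹).real (Iic x) = (1 + erf x) / 2 := by
  simp only [gaussianReal_real_eq_integral 0 (inv_ne_zero two_ne_zero), gaussianPDFReal_zero_half,
    integral_div, integral_exp_neg_sq_Iic]
  field_simp

lemma gaussianReal_eq_map_zero_half (m : ℝ) (v : ℝ≥0) :
    gaussianReal m v = (gaussianReal 0 2⁻¹).map (fun t ↦ m + √(2 * v) * t) := by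
  have h : (fun t ↦ m + √(2 * v) * t) = (m + ·) ∘ (√(2 * v) * ·) := rfl
  rw [h, ← Measure.map_map (by fun_prop) (by fun_prop), gaussianReal_map_const_mul,
    gaussianReal_map_const_add]
  congr 1
  · ring
  · ext
    simp only [NNReal.coe_mul, NNReal.coe_mk, NNReal.coe_inv, NNReal.coe_ofNat]
    rw [Real.sq_sqrt (by positivity)]
    ring

lemma gaussianReal_real_Iic (m c : ℝ) {v : ℝ≥0} (hv : v ≠ 0) :
    (gaussianReal m v).real (Iic c) = (1 + erf ((c - m) / √(2 * v))) / 2 := by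
  have hs : 0 < √(2 * v) := by positivity
  have hpre : (fun t ↦ m + √(2 * v) * t) ⁻¹' Iic c = Iic ((c - m) / √(2 * v)) := by
    ext t
    simp only [mem_preimage, mem_Iic, le_div_iff₀ hs]
    constructor <;> intro <;> linarith
  rw [gaussianReal_eq_map_zero_half, map_measureReal_apply (by fun_prop) measurableSet_Iic, hpre,
    gaussianReal_zero_half_real_Iic]

lemma gaussianReal_real_Ioi (m c : ℝ) {v : ℝ≥0} (hv : v ≠ 0) :
    (gaussianReal m v).real (Ioi c) = (1 + erf ((m - c) / √(2 * v))) / 2 := by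
  rw [← compl_Iic, probReal_compl_eq_one_sub measurableSet_Iic, gaussianReal_real_Iic m c hv,
    ← neg_sub c m, neg_div, erf_neg]
  ring

lemma gaussianPDFReal_mul_exp (m t x : ℝ) (v : ℝ≥0) :
    gaussianPDFReal m v x * exp (t * x)
      = exp (m * t + v * t ^ 2 / 2) * gaussianPDFReal (m + v * t) v x := by
  rcases eq_or_ne v 0 with rfl | hv
  · simp [gaussianPDFReal_zero_var]
  have hv' : (v : ℝ) ≠ 0 := by exact_mod_cast hv
  simp only [gaussianPDFReal_def]
  rw [mul_left_comm, mul_assoc, ← exp_add, ← exp_add]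
  congr 2
  field_simp
  ring

lemma setIntegral_exp_mul_gaussianReal (m t : ℝ) {v : ℝ≥0} (hv : v ≠ 0) {s : Set ℝ}
    (hs : MeasurableSet s) :
    ∫ x in s, exp (t * x) ∂gaussianReal m v
      = exp (m * t + v * t ^ 2 / 2) * (gaussianReal (m + v * t) v).real s := by
  rw [gaussianReal_of_var_ne_zero m hv, restrict_withDensity hs,
    integral_withDensity_eq_integral_toReal_smul (measurable_gaussianPDF m v)
      (ae_of_all _ fun _ ↦ gaussianPDF_lt_top),
    gaussianReal_real_eq_integral _ hv, ← integral_const_mul]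
  simp only [toReal_gaussianPDF, smul_eq_mul, gaussianPDFReal_mul_exp]

lemma integral_ite_le_const_exp_mul_gaussianReal (m A B t a : ℝ) {v : ℝ≥0} (hv : v ≠ 0) :
    ∫ x, (if x ≤ a then A else B * exp (t * x)) ∂gaussianReal m v
      = A * ((1 + erf ((a - m) / √(2 * v))) / 2)
        + B * (exp (m * t + v * t ^ 2 / 2) * ((1 + erf ((m + v * t - a) / √(2 * v))) / 2)) := by
  have hint : Integrable (fun x ↦ if x ≤ a then A else B * exp (t * x)) (gaussianReal m v) :=
    Integrable.piecewise (s := Iic a) measurableSet_Iic (integrable_const _).integrableOn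
      ((integrable_exp_mul_gaussianReal t).const_mul _).integrableOn
  rw [← integral_add_compl measurableSet_Iic hint, compl_Iic,
    setIntegral_congr_fun measurableSet_Iic fun x (hx : x ≤ a) ↦ if_pos hx,
    setIntegral_congr_fun measurableSet_Ioi fun x (hx : a < x) ↦ if_neg hx.not_ge,
    setIntegral_const, smul_eq_mul, integral_const_mul,
    setIntegral_exp_mul_gaussianReal _ _ hv measurableSet_Ioi, mul_comm _ A,
    gaussianReal_real_Iic _ _ hv, gaussianReal_real_Ioi _ _ hv]

theorem rv_insider_expected_wealth (T σ μ ρ : ℝ) (hT : 0 < T) (hσ : 0 < σ)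
    (a : ℝ) (ha : a = (ρ - μ + σ ^ 2 / 2) * T / σ) :
    ∫ x, (if x ≤ a then Real.exp (ρ * T) else Real.exp ((μ - σ ^ 2 / 2) * T + σ * x))
        ∂(gaussianReal 0 T.toNNReal)
      = (1 / 2) * (1 + erf ((σ ^ 2 + 2 * ρ - 2 * μ) * Real.sqrt T / (2 * Real.sqrt 2 * σ)))
          * Real.exp (ρ * T)
        + (1 / 2) * (1 + erf ((σ ^ 2 - 2 * ρ + 2 * μ) * Real.sqrt T / (2 * Real.sqrt 2 * σ)))
          * Real.exp (μ * T) := by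
  simp_rw [exp_add]
  rw [integral_ite_le_const_exp_mul_gaussianReal _ _ _ _ _ (Real.toNNReal_pos.2 hT).ne',
    Real.coe_toNNReal T hT.le]
  have hsqrt : √(2 * T) = √2 * √T := Real.sqrt_mul zero_le_two T
  have hT' : √T ^ 2 = T := Real.sq_sqrt hT.le
  have hlow : (a - 0) / √(2 * T) = (σ ^ 2 + 2 * ρ - 2 * μ) * √T / (2 * √2 * σ) := by
    rw [hsqrt, ha]
    field_simp
    linear_combination -(σ ^ 2 + 2 * ρ - 2 * μ) * hT'
  have hhigh : (0 + T * σ - a) / √(2 * T) = (σ ^ 2 - 2 * ρ + 2 * μ) * √T / (2 * √2 * σ) := by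
    rw [hsqrt, ha]
    field_simp
    linear_combination -(σ ^ 2 - 2 * ρ + 2 * μ) * hT'
  have hdrift : exp ((μ - σ ^ 2 / 2) * T) * exp (0 * σ + T * σ ^ 2 / 2) = exp (μ * T) := by
    rw [← exp_add]
    ring_nf
  rw [hlow, hhigh, ← hdrift]
  ring
end

section
/- For all σ, T > 0 and μ, ρ ∈ ℝ, the difference between the Russo-Vallois insider's and the Skorokhod insider's expected wealths equals (e^{μT}/2)(erf((σ²-2ρ+2μ)√T/(2√2σ)) + erf((σ²+2ρ-2μ)√T/(2√2σ))), and this quantity is strictly positive. -/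
open MeasureTheory ProbabilityTheory Real

lemma intble (a b : ℝ) : IntervalIntegrable (fun t : ℝ => Real.exp (-t ^ 2)) volume a b :=
  (Continuous.intervalIntegrable (by continuity) a b)

lemma erf_add_pos {a b : ℝ} (h : 0 < a + b) : 0 < erf a + erf b := by
  unfold erf
  rw [← mul_add]
  have hπ : 0 < (2 : ℝ) / Real.sqrt π := by positivity
  refine mul_pos hπ ?_
  have h1 : (∫ t in (0:ℝ)..a, Real.exp (-t ^ 2)) = ∫ t in (-a)..0, Real.exp (-t ^ 2) := by
    have := intervalIntegral.integral_comp_neg (a := (0:ℝ)) (b := a)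
      (fun t : ℝ => Real.exp (-t ^ 2))
    simp only [neg_zero] at this
    rw [← this]
    congr 1
    ext t
    ring_nf
  rw [h1, intervalIntegral.integral_add_adjacent_intervals (intble (-a) 0) (intble 0 b)]
  apply intervalIntegral.intervalIntegral_pos_of_pos (intble (-a) b)
  · intro x; exact Real.exp_pos _
  · linarith

theorem rv_minus_sk (σ T μ ρ : ℝ) (hσ : 0 < σ) (hT : 0 < T) :
    (((1 / 2) * (1 + erf ((σ ^ 2 + 2 * ρ - 2 * μ) * Real.sqrt T / (2 * Real.sqrt 2 * σ)))
          * Real.exp (ρ * T)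
        + (1 / 2) * (1 + erf ((σ ^ 2 - 2 * ρ + 2 * μ) * Real.sqrt T / (2 * Real.sqrt 2 * σ)))
          * Real.exp (μ * T))
      - ((1 / 2) * (1 + erf ((σ ^ 2 + 2 * ρ - 2 * μ) * Real.sqrt T / (2 * Real.sqrt 2 * σ)))
          * Real.exp (ρ * T)
        + (1 / 2) * (1 - erf ((σ ^ 2 + 2 * ρ - 2 * μ) * Real.sqrt T / (2 * Real.sqrt 2 * σ)))
          * Real.exp (μ * T))
      = (Real.exp (μ * T) / 2)
          * (erf ((σ ^ 2 - 2 * ρ + 2 * μ) * Real.sqrt T / (2 * Real.sqrt 2 * σ))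
            + erf ((σ ^ 2 + 2 * ρ - 2 * μ) * Real.sqrt T / (2 * Real.sqrt 2 * σ))))
    ∧ 0 < (Real.exp (μ * T) / 2)
          * (erf ((σ ^ 2 - 2 * ρ + 2 * μ) * Real.sqrt T / (2 * Real.sqrt 2 * σ))
            + erf ((σ ^ 2 + 2 * ρ - 2 * μ) * Real.sqrt T / (2 * Real.sqrt 2 * σ))) := by
  constructor
  · ring
  · refine mul_pos (by positivity) (erf_add_pos ?_)
    have h2 : (0:ℝ) < Real.sqrt 2 := by positivity
    have hTs : (0:ℝ) < Real.sqrt T := Real.sqrt_pos.mpr hT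
    have : (σ ^ 2 - 2 * ρ + 2 * μ) * Real.sqrt T / (2 * Real.sqrt 2 * σ)
        + (σ ^ 2 + 2 * ρ - 2 * μ) * Real.sqrt T / (2 * Real.sqrt 2 * σ)
        = σ * Real.sqrt T / Real.sqrt 2 := by
      field_simp
      ring
    rw [this]
    positivity
end
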